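/- arXiv:2308.15065 — 2 statements merged into one kernel-verified Lean document; each statement's English description precedes it below -/
import Mathlib

section
/- Let NN[i][j] be defined by the recurrence NN[i][j] = min over ℓ1-distance-to-(x_i,y_j) of T[i][j], NN[i−1][j], and NN[i][j−1], where T[i][j] = (x_i, y_j) if (x_i, y_j) ∈ P and empty otherwise, with NN[0][j] and NN[i][0] empty. Then NN[i][j] equals the ℓ1-nearest neighbor of (x_i, y_j) among all points of P of the form (x_{i'}, y_{j'}) with i' ≤ i and j' ≤ j. -/
open Classical

/-- ℓ1 distance from a point `p` to a query point `q`. -/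
noncomputable def dL1 (q p : ℝ × ℝ) : ℝ := |p.1 - q.1| + |p.2 - q.2|

/-- Pick whichever of two optional points is closer (in ℓ1) to the query `q`;
`none` represents an empty entry (a point at infinite distance). -/
noncomputable def minBy (q : ℝ × ℝ) : Option (ℝ × ℝ) → Option (ℝ × ℝ) → Option (ℝ × ℝ)
  | none, o => o
  | some p, none => some p
  | some p, some r => if dL1 q p ≤ dL1 q r then some p else some r

/-- The dynamic-programming table:
`NN[i][j] = min(T[i][j], NN[i−1][j], NN[i][j−1])` w.r.t. ℓ1 distance to `(x i, y j)`,
where `T[i][j] = (x i, y j)` if `(x i, y j) ∈ P` and empty otherwise, and boundary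
entries `NN[0][·]`, `NN[·][0]` are empty. -/
noncomputable def NN (P : Finset (ℝ × ℝ)) (x y : ℕ → ℝ) : ℕ → ℕ → Option (ℝ × ℝ)
  | 0, _ => none
  | _ + 1, 0 => none
  | i + 1, j + 1 =>
      let q : ℝ × ℝ := (x (i + 1), y (j + 1))
      minBy q (if q ∈ P then some q else none)
        (minBy q (NN P x y i (j + 1)) (NN P x y (i + 1) j))
  termination_by i j => (i, j)

set_option linter.unnecessarySeqFocus false

lemma minBy_eq_none (q : ℝ × ℝ) (a b : Option (ℝ × ℝ)) :
    minBy q a b = none ↔ a = none ∧ b = none := by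
  cases a <;> cases b <;> simp [minBy] <;> split <;> simp

lemma minBy_some (q : ℝ × ℝ) (a b : Option (ℝ × ℝ)) (p : ℝ × ℝ)
    (h : minBy q a b = some p) :
    (a = some p ∨ b = some p) ∧
    (∀ r, a = some r → dL1 q p ≤ dL1 q r) ∧
    (∀ r, b = some r → dL1 q p ≤ dL1 q r) := by
  cases a with
  | none =>
    cases b with
    | none => simp [minBy] at h
    | some r => simp [minBy] at h; subst h; simp
  | some s =>
    cases b with
    | none =>
      simp [minBy] at h; subst h
      refine ⟨Or.inl rfl, ?_, ?_⟩ <;> rintro r hr <;> simp_all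
    | some r =>
      simp only [minBy] at h
      split at h <;> rename_i hle <;>
        (injection h with h; subst h) <;>
        refine ⟨by simp, ?_, ?_⟩ <;> rintro r' hr' <;>
        (injection hr' with e; subst e) <;> first | rfl | linarith

/-- membership predicate -/
def InS (P : Finset (ℝ × ℝ)) (x y : ℕ → ℝ) (i j : ℕ) (p : ℝ × ℝ) : Prop :=
  p ∈ P ∧ ∃ i' j', 1 ≤ i' ∧ i' ≤ i ∧ 1 ≤ j' ∧ j' ≤ j ∧ p = (x i', y j')

lemma InS_bounds {P : Finset (ℝ × ℝ)} {x y : ℕ → ℝ} (hx : StrictMono x) (hy : StrictMono y)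
    {i j : ℕ} {p : ℝ × ℝ} (h : InS P x y i j p) : p.1 ≤ x i ∧ p.2 ≤ y j := by
  obtain ⟨-, i', j', -, h2, -, h4, rfl⟩ := h
  exact ⟨hx.monotone h2, hy.monotone h4⟩

lemma InS_decomp {P : Finset (ℝ × ℝ)} {x y : ℕ → ℝ} {i j : ℕ} {p : ℝ × ℝ} :
    InS P x y (i+1) (j+1) p ↔
      (p = (x (i+1), y (j+1)) ∧ p ∈ P) ∨ InS P x y i (j+1) p ∨ InS P x y (i+1) j p := by
  constructor
  · rintro ⟨hp, i', j', h1, h2, h3, h4, rfl⟩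
    rcases Nat.lt_or_ge i' (i+1) with hi | hi
    · exact Or.inr (Or.inl ⟨hp, i', j', h1, by omega, h3, h4, rfl⟩)
    · rcases Nat.lt_or_ge j' (j+1) with hj | hj
      · exact Or.inr (Or.inr ⟨hp, i', j', h1, h2, h3, by omega, rfl⟩)
      · have : i' = i+1 := by omega
        have : j' = j+1 := by omega
        subst this; subst ‹i' = i+1›
        exact Or.inl ⟨rfl, hp⟩
  · rintro (⟨rfl, hp⟩ | ⟨hp, i', j', h1, h2, h3, h4, rfl⟩ | ⟨hp, i', j', h1, h2, h3, h4, rfl⟩)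
    · exact ⟨hp, i+1, j+1, by omega, le_rfl, by omega, le_rfl, rfl⟩
    · exact ⟨hp, i', j', h1, by omega, h3, h4, rfl⟩
    · exact ⟨hp, i', j', h1, h2, h3, by omega, rfl⟩

lemma dL1_shift_x {a a' : ℝ} (b : ℝ) {p : ℝ × ℝ} (h1 : p.1 ≤ a) (h2 : a ≤ a') :
    dL1 (a', b) p = dL1 (a, b) p + (a' - a) := by
  unfold dL1
  rw [abs_of_nonpos (by simpa using h1.trans h2 : p.1 - a' ≤ 0),
      abs_of_nonpos (by simpa using h1 : p.1 - a ≤ 0)]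
  ring

lemma dL1_shift_y (a : ℝ) {b b' : ℝ} {p : ℝ × ℝ} (h1 : p.2 ≤ b) (h2 : b ≤ b') :
    dL1 (a, b') p = dL1 (a, b) p + (b' - b) := by
  unfold dL1
  rw [abs_of_nonpos (by simpa using h1.trans h2 : p.2 - b' ≤ 0),
      abs_of_nonpos (by simpa using h1 : p.2 - b ≤ 0)]
  ring

lemma NN_main (P : Finset (ℝ × ℝ)) (x y : ℕ → ℝ) (hx : StrictMono x) (hy : StrictMono y) :
    ∀ k i j, i + j ≤ k →
      (NN P x y i j = none ↔ ∀ p, ¬ InS P x y i j p) ∧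
      (∀ p, NN P x y i j = some p →
        InS P x y i j p ∧ ∀ r, InS P x y i j r → dL1 (x i, y j) p ≤ dL1 (x i, y j) r) := by
  intro k
  induction k with
  | zero =>
    intro i j hk
    have hi : i = 0 := by omega
    have hj : j = 0 := by omega
    subst hi; subst hj
    rw [NN]
    refine ⟨⟨fun _ p hp => ?_, fun _ => rfl⟩, fun p hp => by simp at hp⟩
    obtain ⟨-, i', j', h1, h2, -⟩ := hp; omega
  | succ k ih =>
    intro i j hk
    match i, j with
    | 0, j =>
      rw [NN]
      refine ⟨⟨fun _ p hp => ?_, fun _ => rfl⟩, fun p hp => by simp at hp⟩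
      obtain ⟨-, i', j', h1, h2, -⟩ := hp; omega
    | i+1, 0 =>
      rw [NN]
      refine ⟨⟨fun _ p hp => ?_, fun _ => rfl⟩, fun p hp => by simp at hp⟩
      obtain ⟨-, i', j', h1, h2, h3, h4, -⟩ := hp; omega
    | i+1, j+1 =>
      have IH1 := ih i (j+1) (by omega)
      have IH2 := ih (i+1) j (by omega)
      set q : ℝ × ℝ := (x (i+1), y (j+1)) with hq
      have hNN : NN P x y (i+1) (j+1) =
          minBy q (if q ∈ P then some q else none)
            (minBy q (NN P x y i (j+1)) (NN P x y (i+1) j)) := by rw [NN]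
      -- shift facts
      have shiftx : ∀ p, InS P x y i (j+1) p →
          dL1 q p = dL1 (x i, y (j+1)) p + (x (i+1) - x i) := fun p hp =>
        dL1_shift_x _ (InS_bounds hx hy hp).1 (hx (by omega)).le
      have shifty : ∀ p, InS P x y (i+1) j p →
          dL1 q p = dL1 (x (i+1), y j) p + (y (j+1) - y j) := fun p hp =>
        dL1_shift_y _ (InS_bounds hx hy hp).2 (hy (by omega)).le
      constructor
      · rw [hNN, minBy_eq_none, minBy_eq_none, IH1.1, IH2.1]
        constructor
        · rintro ⟨hT, h1, h2⟩ p hp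
          rcases InS_decomp.mp hp with ⟨rfl, hpP⟩ | h | h
          · simp [hq, hpP] at hT
          · exact h1 p h
          · exact h2 p h
        · intro h
          refine ⟨?_, fun p hp => h p (InS_decomp.mpr (Or.inr (Or.inl hp))),
                  fun p hp => h p (InS_decomp.mpr (Or.inr (Or.inr hp)))⟩
          by_cases hqP : q ∈ P
          · exact absurd (InS_decomp.mpr (Or.inl ⟨rfl, hqP⟩)) (h q)
          · simp [hqP]
      · intro p hp
        rw [hNN] at hp
        obtain ⟨hmem, hT, hinner⟩ := minBy_some _ _ _ _ hp
        -- membership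
        have hpInS : InS P x y (i+1) (j+1) p := by
          rcases hmem with h | h
          · split at h
            · injection h with h; subst h
              exact InS_decomp.mpr (Or.inl ⟨rfl, by assumption⟩)
            · exact absurd h (by simp)
          · obtain ⟨hmem', _, _⟩ := minBy_some _ _ _ _ h
            rcases hmem' with h' | h'
            · exact InS_decomp.mpr (Or.inr (Or.inl ((IH1.2 p h').1)))
            · exact InS_decomp.mpr (Or.inr (Or.inr ((IH2.2 p h').1)))
        refine ⟨hpInS, fun r hr => ?_⟩
        rcases InS_decomp.mp hr with ⟨rfl, hrP⟩ | h | h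
        · exact hT q (if_pos (hq ▸ hrP))
        · -- r in lower-left block
          obtain ⟨p₁, hp₁⟩ := Option.ne_none_iff_exists'.mp
            (fun hn => (IH1.1.mp hn) r h)
          obtain ⟨m, hm⟩ := Option.ne_none_iff_exists'.mp
            (fun hn => by rw [minBy_eq_none] at hn; exact (Option.some_ne_none p₁) (hp₁ ▸ hn.1))
          have h1 : dL1 q p ≤ dL1 q m := hinner m hm
          have h2 : dL1 q m ≤ dL1 q p₁ := (minBy_some _ _ _ _ hm).2.1 p₁ hp₁
          have h3 := (IH1.2 p₁ hp₁).2 r h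
          have hp₁S := (IH1.2 p₁ hp₁).1
          rw [shiftx p₁ hp₁S, shiftx r h] at *
          linarith [h1, h2]
        · obtain ⟨p₁, hp₁⟩ := Option.ne_none_iff_exists'.mp
            (fun hn => (IH2.1.mp hn) r h)
          obtain ⟨m, hm⟩ := Option.ne_none_iff_exists'.mp
            (fun hn => by rw [minBy_eq_none] at hn; exact (Option.some_ne_none p₁) (hp₁ ▸ hn.2))
          have h1 : dL1 q p ≤ dL1 q m := hinner m hm
          have h2 : dL1 q m ≤ dL1 q p₁ := (minBy_some _ _ _ _ hm).2.2 p₁ hp₁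
          have h3 := (IH2.2 p₁ hp₁).2 r h
          have hp₁S := (IH2.2 p₁ hp₁).1
          rw [shifty p₁ hp₁S, shifty r h] at *
          linarith [h1, h2]

/-- `NN[i][j]` equals the ℓ1-nearest neighbor of `(x i, y j)` among all points of `P`
of the form `(x i', y j')` with `i' ≤ i` and `j' ≤ j` (it is `none` iff there is no
such point, and otherwise it is such a point minimizing the ℓ1 distance). -/
theorem NN_is_nearest (P : Finset (ℝ × ℝ)) (n : ℕ) (x y : ℕ → ℝ)
    (hx : StrictMono x) (hy : StrictMono y)
    (hP : ∀ p ∈ P, ∃ i' j', 1 ≤ i' ∧ i' ≤ n ∧ 1 ≤ j' ∧ j' ≤ n ∧ p = (x i', y j'))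
    (i j : ℕ) (hi : 1 ≤ i) (hi' : i ≤ n) (hj : 1 ≤ j) (hj' : j ≤ n)
    (S : Set (ℝ × ℝ))
    (hS : S = {p | p ∈ P ∧ ∃ i' j', 1 ≤ i' ∧ i' ≤ i ∧ 1 ≤ j' ∧ j' ≤ j ∧ p = (x i', y j')}) :
    (NN P x y i j = none ↔ S = ∅) ∧
    (∀ p, NN P x y i j = some p →
      p ∈ S ∧ ∀ r ∈ S, dL1 (x i, y j) p ≤ dL1 (x i, y j) r) := by

  subst hS
  have key := NN_main P x y hx hy (i + j) i j le_rfl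
  have hmemS : ∀ p : ℝ × ℝ,
      p ∈ {p : ℝ × ℝ | p ∈ P ∧ ∃ i' j', 1 ≤ i' ∧ i' ≤ i ∧ 1 ≤ j' ∧ j' ≤ j ∧ p = (x i', y j')}
        ↔ InS P x y i j p := fun p => Iff.rfl
  constructor
  · rw [key.1, Set.eq_empty_iff_forall_notMem]
    exact ⟨fun h p hp => h p ((hmemS p).mp hp), fun h p hp => h p ((hmemS p).mpr hp)⟩
  · intro p hp
    obtain ⟨h1, h2⟩ := key.2 p hp
    exact ⟨(hmemS p).mpr h1, fun r hr => h2 r ((hmemS r).mp hr)⟩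
end

section
/- Let P be a finite set of points in the plane and let u, v ∈ P. In the Yao-graph on P with k ≥ 4 cones of angle θ = 2π/k < π/4, greedy routing from u toward v terminates: at each non-terminal step the Euclidean distance to v strictly decreases by a positive amount, hence the greedy path reaches v in at most |P| steps. -/
open Real

/-- Euclidean distance in the plane. -/
noncomputable def edist2 (p q : ℝ × ℝ) : ℝ :=
  Real.sqrt ((p.1 - q.1) ^ 2 + (p.2 - q.2) ^ 2)

/-- `p` lies in the `i`-th Yao cone of apex `w` (of `k` cones of angle `2π/k`):
`p − w` is a positive multiple of a unit vector with angle in `[2πi/k, 2π(i+1)/k)`. -/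
def inCone (k i : ℕ) (w p : ℝ × ℝ) : Prop :=
  ∃ α r : ℝ, 0 < r ∧ 2 * π * i / k ≤ α ∧ α < 2 * π * (i + 1) / k ∧
    p - w = (r * Real.cos α, r * Real.sin α)

lemma edist2_polar (w p : ℝ × ℝ) (r α : ℝ) (hr : 0 ≤ r)
    (h : p - w = (r * Real.cos α, r * Real.sin α)) : edist2 w p = r := by
  have h1 : p.1 - w.1 = r * Real.cos α := by
    have := congrArg Prod.fst h; simpa using this
  have h2 : p.2 - w.2 = r * Real.sin α := by
    have := congrArg Prod.snd h; simpa using this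
  have hs : Real.sin α ^ 2 + Real.cos α ^ 2 = 1 := Real.sin_sq_add_cos_sq α
  have key : (w.1 - p.1) ^ 2 + (w.2 - p.2) ^ 2 = r ^ 2 := by
    have e1 : w.1 - p.1 = -(r * Real.cos α) := by linarith
    have e2 : w.2 - p.2 = -(r * Real.sin α) := by linarith
    rw [e1, e2]; linear_combination r ^ 2 * hs
  rw [edist2, key, Real.sqrt_sq hr]

lemma cone_decrease (k i : ℕ) (hk : 4 ≤ k) (hθ : 2 * π / k < π / 4)
    (w p q : ℝ × ℝ) (hp : inCone k i w p) (hq : inCone k i w q)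
    (hle : edist2 w p ≤ edist2 w q) : edist2 p q < edist2 w q := by
  obtain ⟨α, a, ha, hαl, hαu, hpw⟩ := hp
  obtain ⟨β, b, hb, hβl, hβu, hqw⟩ := hq
  have hpi := Real.pi_pos
  have hkpos : (0 : ℝ) < k := by
    have : (4 : ℝ) ≤ k := by exact_mod_cast hk
    linarith
  have hwp : edist2 w p = a := edist2_polar w p a α ha.le hpw
  have hwq : edist2 w q = b := edist2_polar w q b β hb.le hqw
  rw [hwp, hwq] at hle
  -- the angle difference is small
  have hsplitα : 2 * π * ((i : ℝ) + 1) / k = 2 * π * i / k + 2 * π / k := by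
    field_simp
  have habs : |β - α| < π / 3 := by
    rw [abs_sub_lt_iff]
    constructor <;> linarith [hsplitα, hpi]
  -- cos of the angle difference is > 1/2
  have hcos : (1 : ℝ) / 2 < Real.cos (β - α) := by
    have h1 : Real.cos (π / 3) < Real.cos |β - α| := by
      apply Real.cos_lt_cos_of_nonneg_of_le_pi (abs_nonneg _) (by linarith) habs
    rw [Real.cos_pi_div_three, Real.cos_abs] at h1
    exact h1
  -- compute squared distance p q
  have hp1 : p.1 - w.1 = a * Real.cos α := by
    have := congrArg Prod.fst hpw; simpa using this
  have hp2 : p.2 - w.2 = a * Real.sin α := by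
    have := congrArg Prod.snd hpw; simpa using this
  have hq1 : q.1 - w.1 = b * Real.cos β := by
    have := congrArg Prod.fst hqw; simpa using this
  have hq2 : q.2 - w.2 = b * Real.sin β := by
    have := congrArg Prod.snd hqw; simpa using this
  have hcs : Real.cos (β - α) = Real.cos β * Real.cos α + Real.sin β * Real.sin α :=
    Real.cos_sub β α
  have hS : (p.1 - q.1) ^ 2 + (p.2 - q.2) ^ 2
      = a ^ 2 + b ^ 2 - 2 * a * b * Real.cos (β - α) := by
    have e1 : p.1 - q.1 = a * Real.cos α - b * Real.cos β := by linarith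
    have e2 : p.2 - q.2 = a * Real.sin α - b * Real.sin β := by linarith
    have hsα := Real.sin_sq_add_cos_sq α
    have hsβ := Real.sin_sq_add_cos_sq β
    rw [e1, e2, hcs]; linear_combination a ^ 2 * hsα + b ^ 2 * hsβ
  rw [edist2, hS, hwq]
  rw [Real.sqrt_lt' hb]
  nlinarith [mul_pos ha hb, mul_nonneg ha.le (sub_nonneg.2 hle),
    mul_pos (show (0:ℝ) < Real.cos (β - α) - 1 / 2 by linarith) (mul_pos ha hb)]

/-- Greedy routing in the Yao-graph on a finite point set `P` with `k ≥ 4` cones of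
angle `θ = 2π/k < π/4` terminates: at every non-terminal step the Euclidean
distance to the destination `v` strictly decreases, hence the greedy path
(which at each step follows the Yao edge of the current point in the cone
containing `v`) reaches `v` within `|P|` steps. -/
theorem yao_greedy_routing_terminates (P : Finset (ℝ × ℝ)) (u v : ℝ × ℝ)
    (hu : u ∈ P) (hv : v ∈ P) (k : ℕ) (hk : 4 ≤ k) (hθ : 2 * π / k < π / 4)
    (f : ℕ → ℝ × ℝ) (hf0 : f 0 = u) (hfP : ∀ n, f n ∈ P)
    (hstep : ∀ n, f n ≠ v → ∃ i < k,
      inCone k i (f n) v ∧ inCone k i (f n) (f (n + 1)) ∧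
      ∀ p ∈ P, inCone k i (f n) p → edist2 (f n) (f (n + 1)) ≤ edist2 (f n) p)
    (hstop : ∀ n, f n = v → f (n + 1) = v) :
    (∀ n, f n ≠ v → edist2 (f (n + 1)) v < edist2 (f n) v) ∧
    ∃ N ≤ P.card, f N = v := by
  have hsym : ∀ x y : ℝ × ℝ, edist2 x y = edist2 y x := by
    intro x y; unfold edist2; ring_nf
  have hdec : ∀ n, f n ≠ v → edist2 (f (n + 1)) v < edist2 (f n) v := by
    intro n hn
    obtain ⟨i, hik, hcv, hcw, hmin⟩ := hstep n hn
    have hle := hmin v hv hcv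
    have := cone_decrease k i hk hθ (f n) (f (n + 1)) v hcw hcv hle
    exact this
  refine ⟨hdec, ?_⟩
  by_contra hcon
  push_neg at hcon
  have hne : ∀ N ≤ P.card, f N ≠ v := hcon
  have hmono : ∀ n m, n < m → m ≤ P.card → edist2 (f m) v < edist2 (f n) v := by
    intro n m
    induction m with
    | zero => omega
    | succ m ih =>
      intro h hm
      have hm' : m ≤ P.card := by omega
      have hstep' := hdec m (hne m hm')
      rcases Nat.lt_or_ge n m with h' | h'
      · exact hstep'.trans (ih h' hm')
      · have : n = m := by omega
        subst this; exact hstep'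
  have hinj : Function.Injective (fun n : Fin (P.card + 1) => (⟨f n, hfP n⟩ : P)) := by
    intro a b hab
    have hfe : f a = f b := by simpa using congrArg Subtype.val hab
    have ha' : (a : ℕ) ≤ P.card := by omega
    have hb' : (b : ℕ) ≤ P.card := by omega
    rcases lt_trichotomy (a : ℕ) (b : ℕ) with h | h | h
    · have := hmono a b h hb'
      rw [hfe] at this; exact absurd this (lt_irrefl _)
    · exact Fin.ext h
    · have := hmono b a h ha'
      rw [hfe] at this; exact absurd this (lt_irrefl _)
  have hle : P.card + 1 ≤ P.card := by
    calc P.card + 1 = Fintype.card (Fin (P.card + 1)) := by simp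
      _ ≤ Fintype.card P := Fintype.card_le_of_injective _ hinj
      _ = P.card := Fintype.card_coe P
  omega
end
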